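/- Let d ≥ 1 be an integer, p ≥ 1 an odd integer, and μ a finite signed Borel measure on S^{d−1} × ℝ. (i) If μ is odd (σ_#μ = −μ), then H^p_μ(x) = (1/2)·∫_{S^{d−1}×ℝ} ( (⟨w,x⟩ − b)^p + b^p )/ψ(b) dμ(w,b) for all x ∈ ℝ^d; in particular H^p_μ is a polynomial function of x of degree at most p. (ii) If μ is even (σ_#μ = μ), then H^p_μ(x) = (1/2)·∫_{S^{d−1}×ℝ} ( |⟨w,x⟩ − b|^p − |b|^p )/ψ(b) dμ(w,b) for all x ∈ ℝ^d. -/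

import Mathlib

open MeasureTheory
open scoped RealInnerProductSpace ENNReal

/-- The unit sphere `S^{d-1} ⊆ ℝ^d`. -/
abbrev Sph (d : ℕ) := {w : EuclideanSpace ℝ (Fin d) // ‖w‖ = 1}

/-- The RePU activation `[t]₊^p = max(t,0)^p`. -/
noncomputable def repu (p : ℕ) (t : ℝ) : ℝ := (max t 0) ^ p

/-- The weight `ψ(b) = 1 + |b|^{p-1}`. -/
noncomputable def ψ (p : ℕ) (b : ℝ) : ℝ := 1 + |b| ^ (p - 1)

/-- Integral of a function against a finite signed measure, via the Jordan decomposition. -/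
noncomputable def sintegral {α : Type*} [MeasurableSpace α]
    (μ : SignedMeasure α) (g : α → ℝ) : ℝ :=
  (∫ x, g x ∂μ.toJordanDecomposition.posPart) - (∫ x, g x ∂μ.toJordanDecomposition.negPart)

/-- The infinite-width RePU network `H^p_{μ,c}`. -/
noncomputable def Hnet (d p : ℕ) (μ : SignedMeasure (Sph d × ℝ)) (c : ℝ)
    (x : EuclideanSpace ℝ (Fin d)) : ℝ :=
  sintegral μ (fun z : Sph d × ℝ =>
    (repu p (⟪(z.1 : EuclideanSpace ℝ (Fin d)), x⟫ - z.2) - repu p (-z.2)) / ψ p z.2) + c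

/-- The monomial-units term `∑_{k=1}^p ⟨v_k, x^{∘k}⟩`, where `x^{∘k}` is the entrywise
`k`-th power of `x`; here `v k` carries the weight of the power `k+1`. -/
noncomputable def monom (d p : ℕ) (v : Fin p → EuclideanSpace ℝ (Fin d))
    (x : EuclideanSpace ℝ (Fin d)) : ℝ :=
  ∑ k : Fin p, ∑ i : Fin d, v k i * x i ^ ((k : ℕ) + 1)

/-- The infinite-width RePU network with monomial units `H^p_{μ,v,c}`. -/
noncomputable def Hfull (d p : ℕ) (μ : SignedMeasure (Sph d × ℝ))
    (v : Fin p → EuclideanSpace ℝ (Fin d)) (c : ℝ) (x : EuclideanSpace ℝ (Fin d)) : ℝ :=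
  Hnet d p μ c x + monom d p v x

/-- The weighted total variation norm `‖μ‖_{M¹(1/ψ)} = ∫ ψ(b)⁻¹ d|μ|(w,b)`. -/
noncomputable def wnorm (d p : ℕ) (μ : SignedMeasure (Sph d × ℝ)) : ℝ :=
  ∫ z : Sph d × ℝ, (ψ p z.2)⁻¹ ∂μ.totalVariation

/-- The involution `σ(w,b) = (-w,-b)` on `S^{d-1} × ℝ`. -/
noncomputable def negPair (d : ℕ) (z : Sph d × ℝ) : Sph d × ℝ :=
  (⟨-(z.1 : EuclideanSpace ℝ (Fin d)), by rw [norm_neg]; exact z.1.2⟩, -z.2)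

/-! ### Auxiliary material -/

instance sphBorel (d : ℕ) : BorelSpace (Sph d) :=
  Subtype.borelSpace {w : EuclideanSpace ℝ (Fin d) | ‖w‖ = 1}

lemma continuous_negPair (d : ℕ) : Continuous (negPair d) := by
  apply Continuous.prodMk
  · exact Continuous.subtype_mk ((continuous_subtype_val.comp continuous_fst).neg) _
  · exact continuous_snd.neg

noncomputable def negPairEquiv (d : ℕ) : (Sph d × ℝ) ≃ᵐ (Sph d × ℝ) where
  toFun := negPair d
  invFun := negPair d
  left_inv z := by simp [negPair]
  right_inv z := by simp [negPair]
  measurable_toFun := (continuous_negPair d).measurable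
  measurable_invFun := (continuous_negPair d).measurable

@[simp] lemma negPairEquiv_coe (d : ℕ) : ⇑(negPairEquiv d) = negPair d := rfl

section SintegralLemmas

variable {α : Type*} [MeasurableSpace α]

noncomputable def jdMap (μ : SignedMeasure α) (e : α ≃ᵐ α) : JordanDecomposition α where
  posPart := Measure.map e μ.toJordanDecomposition.posPart
  negPart := Measure.map e μ.toJordanDecomposition.negPart
  mutuallySingular := by
    obtain ⟨s, hs, h1, h2⟩ := μ.toJordanDecomposition.mutuallySingular
    have hpre : ⇑e ⁻¹' (⇑e.symm ⁻¹' s) = s := by ext x; simp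
    refine ⟨e.symm ⁻¹' s, e.symm.measurable hs, ?_, ?_⟩
    · rw [Measure.map_apply e.measurable (e.symm.measurable hs), hpre]; exact h1
    · rw [Measure.map_apply e.measurable (e.symm.measurable hs).compl,
        Set.preimage_compl, hpre]; exact h2

lemma jd_map (μ : SignedMeasure α) (e : α ≃ᵐ α) :
    SignedMeasure.toJordanDecomposition (VectorMeasure.map μ ⇑e) = jdMap μ e := by
  apply SignedMeasure.toJordanDecomposition_eq
  ext s hs
  rw [VectorMeasure.map_apply _ e.measurable hs]
  rw [JordanDecomposition.toSignedMeasure, VectorMeasure.sub_apply,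
    Measure.toSignedMeasure_apply_measurable hs, Measure.toSignedMeasure_apply_measurable hs]
  show _ = (Measure.map e μ.toJordanDecomposition.posPart s).toReal
    - (Measure.map e μ.toJordanDecomposition.negPart s).toReal
  rw [Measure.map_apply e.measurable hs, Measure.map_apply e.measurable hs]
  conv_lhs => rw [← μ.toSignedMeasure_toJordanDecomposition]
  rw [JordanDecomposition.toSignedMeasure, VectorMeasure.sub_apply,
    Measure.toSignedMeasure_apply_measurable (e.measurable hs),
    Measure.toSignedMeasure_apply_measurable (e.measurable hs)]
  rfl

lemma sintegral_map (μ : SignedMeasure α) (e : α ≃ᵐ α) (g : α → ℝ) :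
    sintegral (VectorMeasure.map μ ⇑e) g = sintegral μ (g ∘ e) := by
  rw [sintegral, jd_map]
  show (∫ x, g x ∂Measure.map e μ.toJordanDecomposition.posPart) -
    (∫ x, g x ∂Measure.map e μ.toJordanDecomposition.negPart) = _
  rw [e.measurableEmbedding.integral_map, e.measurableEmbedding.integral_map]
  rfl

lemma sintegral_neg' (μ : SignedMeasure α) (g : α → ℝ) :
    sintegral (-μ) g = - sintegral μ g := by
  rw [sintegral, SignedMeasure.toJordanDecomposition_neg]
  show (∫ x, g x ∂μ.toJordanDecomposition.negPart) -
    (∫ x, g x ∂μ.toJordanDecomposition.posPart) = _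
  rw [sintegral]; ring

def IntS (μ : SignedMeasure α) (g : α → ℝ) : Prop :=
  Integrable g μ.toJordanDecomposition.posPart ∧ Integrable g μ.toJordanDecomposition.negPart

lemma intS_of_bound (μ : SignedMeasure α) (g : α → ℝ) (hg : Measurable g) (C : ℝ)
    (hC : ∀ z, |g z| ≤ C) : IntS μ g := by
  constructor <;>
  · refine ⟨hg.aestronglyMeasurable, ?_⟩
    exact MeasureTheory.HasFiniteIntegral.of_bounded (C := C) (Filter.Eventually.of_forall hC)

lemma sintegral_add (μ : SignedMeasure α) (f g : α → ℝ) (hf : IntS μ f) (hg : IntS μ g) :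
    sintegral μ (fun z => f z + g z) = sintegral μ f + sintegral μ g := by
  rw [sintegral, integral_add hf.1 hg.1, integral_add hf.2 hg.2, sintegral, sintegral]; ring

lemma sintegral_sub (μ : SignedMeasure α) (f g : α → ℝ) (hf : IntS μ f) (hg : IntS μ g) :
    sintegral μ (fun z => f z - g z) = sintegral μ f - sintegral μ g := by
  rw [sintegral, integral_sub hf.1 hg.1, integral_sub hf.2 hg.2, sintegral, sintegral]; ring

lemma sintegral_finset_sum {ι : Type*} (μ : SignedMeasure α) (s : Finset ι) (F : ι → α → ℝ)
    (h : ∀ i ∈ s, IntS μ (F i)) :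
    sintegral μ (fun z => ∑ i ∈ s, F i z) = ∑ i ∈ s, sintegral μ (F i) := by
  rw [sintegral, integral_finset_sum s (fun i hi => (h i hi).1),
    integral_finset_sum s (fun i hi => (h i hi).2)]
  simp only [sintegral]
  rw [Finset.sum_sub_distrib]

lemma intS_finset_sum {ι : Type*} (μ : SignedMeasure α) (s : Finset ι) (F : ι → α → ℝ)
    (h : ∀ i ∈ s, IntS μ (F i)) : IntS μ (fun z => ∑ i ∈ s, F i z) :=
  ⟨integrable_finset_sum s (fun i hi => (h i hi).1),
   integrable_finset_sum s (fun i hi => (h i hi).2)⟩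

lemma sintegral_mul_right (μ : SignedMeasure α) (f : α → ℝ) (c : ℝ) :
    sintegral μ (fun z => f z * c) = sintegral μ f * c := by
  rw [sintegral, integral_mul_const, integral_mul_const, sintegral]; ring

lemma sintegral_congr (μ : SignedMeasure α) (f g : α → ℝ) (h : ∀ z, f z = g z) :
    sintegral μ f = sintegral μ g := by
  have : f = g := funext h
  rw [this]

end SintegralLemmas

/-! ### Bounds -/

lemma psi_pos (p : ℕ) (b : ℝ) : 0 < ψ p b := by
  have : (0:ℝ) ≤ |b| ^ (p-1) := by positivity
  simp only [ψ]; linarith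

lemma psi_ne (p : ℕ) (b : ℝ) : ψ p b ≠ 0 := (psi_pos p b).ne'

lemma psi_neg (p : ℕ) (b : ℝ) : ψ p (-b) = ψ p b := by simp [ψ]

lemma pow_sub_pow_abs_le (p : ℕ) {x y M : ℝ} (hx : 0 ≤ x) (hy : 0 ≤ y)
    (hxM : x ≤ M) (hyM : y ≤ M) : |x ^ p - y ^ p| ≤ p * M ^ (p - 1) * |x - y| := by
  have hM : 0 ≤ M := le_trans hx hxM
  rw [← geom_sum₂_mul, abs_mul]
  gcongr
  calc |∑ i ∈ Finset.range p, x ^ i * y ^ (p - 1 - i)|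
      ≤ ∑ i ∈ Finset.range p, |x ^ i * y ^ (p - 1 - i)| := Finset.abs_sum_le_sum_abs _ _
    _ ≤ ∑ _i ∈ Finset.range p, M ^ (p - 1) := by
        apply Finset.sum_le_sum
        intro i hi
        rw [Finset.mem_range] at hi
        rw [abs_mul, abs_pow, abs_pow, abs_of_nonneg hx, abs_of_nonneg hy]
        calc x ^ i * y ^ (p-1-i) ≤ M ^ i * M ^ (p-1-i) := by gcongr
          _ = M ^ (i + (p-1-i)) := (pow_add M i _).symm
          _ = M ^ (p-1) := by congr 1; omega
    _ = p * M ^ (p - 1) := by rw [Finset.sum_const, Finset.card_range, nsmul_eq_mul]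

/-- bound on `(repu p a - repu p c)/ψ p b` when `|a-c| ≤ X` and `|c| ≤ |b|`. -/
lemma repu_diff_div_psi_le (p : ℕ) (a c b X : ℝ) (hX : 0 ≤ X)
    (h1 : |a - c| ≤ X) (h2 : |c| ≤ |b|) :
    |(repu p a - repu p c) / ψ p b| ≤ p * (2 ^ (p - 1) * (1 + X ^ (p - 1)) * X) := by
  have hb : (0:ℝ) ≤ |b| := abs_nonneg b
  have hM : max |a| |c| ≤ |b| + X := by
    rcases max_cases |a| |c| with ⟨h, _⟩ | ⟨h, _⟩
    · rw [h]
      have : |a| ≤ |c| + |a - c| := by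
        calc |a| = |c + (a - c)| := by ring_nf
          _ ≤ |c| + |a - c| := abs_add_le _ _
      linarith
    · rw [h]; linarith
  have key : |repu p a - repu p c| ≤ p * (|b| + X) ^ (p - 1) * X := by
    have h3 : |max a 0 - max c 0| ≤ |a - c| := abs_max_sub_max_le_abs a c 0
    have := pow_sub_pow_abs_le p (le_max_right a 0) (le_max_right c 0)
      (M := |b| + X) (by
        calc max a 0 ≤ |a| := by
              rcases le_total a 0 with h|h <;> simp [abs_of_nonpos, abs_of_nonneg, h]
          _ ≤ max |a| |c| := le_max_left _ _
          _ ≤ |b| + X := hM)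
      (by
        calc max c 0 ≤ |c| := by
              rcases le_total c 0 with h|h <;> simp [abs_of_nonpos, abs_of_nonneg, h]
          _ ≤ max |a| |c| := le_max_right _ _
          _ ≤ |b| + X := hM)
    calc |repu p a - repu p c| ≤ p * (|b|+X)^(p-1) * |max a 0 - max c 0| := this
      _ ≤ p * (|b|+X)^(p-1) * X :=
          mul_le_mul_of_nonneg_left (le_trans h3 h1) (by positivity)
  have hpow : (|b| + X) ^ (p-1) ≤ 2 ^ (p-1) * (1 + X ^ (p-1)) * ψ p b := by
    have h4 : |b| + X ≤ 2 * max |b| X := by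
      rcases max_cases |b| X with ⟨h, _⟩|⟨h, _⟩ <;> rw [h] <;> linarith
    calc (|b| + X)^(p-1) ≤ (2 * max |b| X)^(p-1) := by gcongr
      _ = 2^(p-1) * (max |b| X)^(p-1) := mul_pow 2 _ _
      _ ≤ 2^(p-1) * (|b|^(p-1) + X^(p-1)) := by
          gcongr
          rcases le_total |b| X with h|h
          · rw [max_eq_right h]; exact le_add_of_nonneg_left (by positivity)
          · rw [max_eq_left h]; exact le_add_of_nonneg_right (by positivity)
      _ ≤ 2^(p-1) * ((1 + X^(p-1)) * ψ p b) := by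
          gcongr
          have hb1 : (0:ℝ) ≤ |b|^(p-1) := by positivity
          have hX1 : (0:ℝ) ≤ X^(p-1) := by positivity
          have : (0:ℝ) ≤ X^(p-1) * |b|^(p-1) := by positivity
          simp only [ψ]; ring_nf; nlinarith
      _ = 2^(p-1) * (1 + X^(p-1)) * ψ p b := by ring
  rw [abs_div, abs_of_pos (psi_pos p b), div_le_iff₀ (psi_pos p b)]
  calc |repu p a - repu p c| ≤ p * (|b| + X) ^ (p - 1) * X := key
    _ ≤ p * (2^(p-1) * (1 + X^(p-1)) * ψ p b) * X :=
          mul_le_mul_of_nonneg_right (mul_le_mul_of_nonneg_left hpow (by positivity)) hX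
    _ = p * (2 ^ (p - 1) * (1 + X ^ (p - 1)) * X) * ψ p b := by ring

lemma coord_abs_le {d : ℕ} (w : EuclideanSpace ℝ (Fin d)) (i : Fin d) : |w i| ≤ ‖w‖ := by
  rw [EuclideanSpace.norm_eq]
  have h1 : |w i| = Real.sqrt (|w i| ^ 2) := by
    rw [Real.sqrt_sq (abs_nonneg _)]
  rw [h1]
  apply Real.sqrt_le_sqrt
  have : |w i| ^ 2 = ‖w i‖ ^ 2 := by norm_num
  rw [this]
  exact Finset.single_le_sum (f := fun j => ‖w j‖ ^ 2) (fun j _ => by positivity)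
    (Finset.mem_univ i)

/-- `|b|^m ≤ ψ p b` for `m ≤ p - 1`. -/
lemma abs_pow_le_psi (p m : ℕ) (hm : m ≤ p - 1) (b : ℝ) : |b| ^ m ≤ ψ p b := by
  rcases le_total |b| 1 with h|h
  · have : |b| ^ m ≤ 1 := pow_le_one₀ (abs_nonneg b) h
    have h2 : (0:ℝ) ≤ |b| ^ (p-1) := by positivity
    simp only [ψ]; linarith
  · have : |b| ^ m ≤ |b| ^ (p-1) := pow_le_pow_right₀ h hm
    simp only [ψ]; linarith

/-! ### Pointwise algebra for odd `p` -/

lemma repu_sub_neg (p : ℕ) (hodd : Odd p) (t : ℝ) : repu p t - repu p (-t) = t ^ p := by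
  have hp : p ≠ 0 := by rintro rfl; exact (Nat.not_odd_iff_even.mpr Even.zero) hodd
  rcases le_total 0 t with h|h
  · rw [repu, repu, max_eq_left h, max_eq_right (neg_nonpos.mpr h), zero_pow hp, sub_zero]
  · rw [repu, repu, max_eq_right h, max_eq_left (neg_nonneg.mpr h), zero_pow hp,
      hodd.neg_pow]
    ring

lemma repu_add_neg (p : ℕ) (hp : 1 ≤ p) (t : ℝ) : repu p t + repu p (-t) = |t| ^ p := by
  have hp' : p ≠ 0 := by omega
  rcases le_total 0 t with h|h
  · rw [repu, repu, max_eq_left h, max_eq_right (neg_nonpos.mpr h), zero_pow hp',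
      add_zero, abs_of_nonneg h]
  · rw [repu, repu, max_eq_right h, max_eq_left (neg_nonneg.mpr h), zero_pow hp',
      zero_add, abs_of_nonpos h]

/-- continuity of the basic integrand. -/
lemma continuous_gfun (d p : ℕ) (x : EuclideanSpace ℝ (Fin d)) :
    Continuous (fun z : Sph d × ℝ =>
      (repu p (⟪(z.1 : EuclideanSpace ℝ (Fin d)), x⟫ - z.2) - repu p (-z.2)) / ψ p z.2) := by
  have hrepu : Continuous (repu p) := (continuous_id.max continuous_const).pow p
  have hinner : Continuous (fun z : Sph d × ℝ => ⟪(z.1 : EuclideanSpace ℝ (Fin d)), x⟫) :=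
    Continuous.inner (continuous_subtype_val.comp continuous_fst) continuous_const
  have hpsi : Continuous (fun z : Sph d × ℝ => ψ p z.2) := by
    simp only [ψ]
    exact continuous_const.add ((continuous_abs.comp continuous_snd).pow (p-1))
  exact ((hrepu.comp (hinner.sub continuous_snd)).sub
    (hrepu.comp continuous_snd.neg)).div hpsi (fun z => psi_ne p z.2)

/-- for odd `p`: (i) if `μ` is odd then
`H^p_μ(x) = (1/2)∫ ((⟨w,x⟩−b)^p + b^p)/ψ(b) dμ(w,b)`, and `H^p_μ` is a polynomial of
degree at most `p`; (ii) if `μ` is even then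
`H^p_μ(x) = (1/2)∫ (|⟨w,x⟩−b|^p − |b|^p)/ψ(b) dμ(w,b)`. -/
theorem stmt_19 (d p : ℕ) (hd : 1 ≤ d) (hp : 1 ≤ p) (hodd : Odd p)
    (μ : SignedMeasure (Sph d × ℝ)) :
    ((VectorMeasure.map μ (negPair d) = -μ →
      (∀ x : EuclideanSpace ℝ (Fin d),
        Hnet d p μ 0 x = (1/2) * sintegral μ (fun z : Sph d × ℝ =>
          ((⟪(z.1 : EuclideanSpace ℝ (Fin d)), x⟫ - z.2) ^ p + z.2 ^ p) / ψ p z.2)) ∧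
      (∃ P : MvPolynomial (Fin d) ℝ, P.totalDegree ≤ p ∧
        ∀ x : EuclideanSpace ℝ (Fin d),
          Hnet d p μ 0 x = MvPolynomial.eval (fun i => x i) P)) ∧
    (VectorMeasure.map μ (negPair d) = μ →
      ∀ x : EuclideanSpace ℝ (Fin d),
        Hnet d p μ 0 x = (1/2) * sintegral μ (fun z : Sph d × ℝ =>
          (|⟪(z.1 : EuclideanSpace ℝ (Fin d)), x⟫ - z.2| ^ p - |z.2| ^ p) / ψ p z.2))) := by
  classical
  set E := EuclideanSpace ℝ (Fin d)
  -- the basic integrand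
  set g : E → Sph d × ℝ → ℝ := fun x z =>
    (repu p (⟪(z.1 : E), x⟫ - z.2) - repu p (-z.2)) / ψ p z.2 with hg_def
  have hHnet : ∀ x, Hnet d p μ 0 x = sintegral μ (g x) := fun x => by
    rw [Hnet, add_zero]
  -- boundedness of g x and g x ∘ negPair
  have hbound : ∀ x : E, ∀ z : Sph d × ℝ,
      |g x z| ≤ p * (2 ^ (p-1) * (1 + ‖x‖^(p-1)) * ‖x‖) := by
    intro x z
    apply repu_diff_div_psi_le p _ _ _ _ (norm_nonneg x)
    · have : ⟪(z.1 : E), x⟫ - z.2 - -z.2 = ⟪(z.1 : E), x⟫ := by ring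
      rw [this]
      calc |⟪(z.1 : E), x⟫| ≤ ‖(z.1 : E)‖ * ‖x‖ := abs_real_inner_le_norm _ _
        _ = ‖x‖ := by rw [z.1.2, one_mul]
    · rw [abs_neg]
  have hcomp : ∀ x : E, ∀ z : Sph d × ℝ,
      g x (negPair d z) = (repu p (z.2 - ⟪(z.1 : E), x⟫) - repu p z.2) / ψ p z.2 := by
    intro x z
    simp only [hg_def, negPair, inner_neg_left, neg_neg, psi_neg]
    norm_num
    ring_nf
  have hboundc : ∀ x : E, ∀ z : Sph d × ℝ,
      |g x (negPair d z)| ≤ p * (2 ^ (p-1) * (1 + ‖x‖^(p-1)) * ‖x‖) := by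
    intro x z
    rw [hcomp]
    apply repu_diff_div_psi_le p _ _ _ _ (norm_nonneg x)
    · have : z.2 - ⟪(z.1 : E), x⟫ - z.2 = -⟪(z.1 : E), x⟫ := by ring
      rw [this, abs_neg]
      calc |⟪(z.1 : E), x⟫| ≤ ‖(z.1 : E)‖ * ‖x‖ := abs_real_inner_le_norm _ _
        _ = ‖x‖ := by rw [z.1.2, one_mul]
    · exact le_refl _
  have hg_cont : ∀ x : E, Continuous (g x) := fun x => continuous_gfun d p x
  have hg_int : ∀ x : E, IntS μ (g x) := fun x =>
    intS_of_bound μ (g x) (hg_cont x).measurable _ (hbound x)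
  have hgc_int : ∀ x : E, IntS μ (fun z => g x (negPair d z)) := fun x =>
    intS_of_bound μ _ ((hg_cont x).comp (continuous_negPair d)).measurable _ (hboundc x)
  -- change of variables
  have hmapeq : ∀ x : E, sintegral μ (fun z => g x (negPair d z)) =
      sintegral (VectorMeasure.map μ (negPair d)) (g x) := by
    intro x
    rw [show (VectorMeasure.map μ (negPair d)) = VectorMeasure.map μ ⇑(negPairEquiv d) from rfl,
      sintegral_map]
    rfl
  -- part (i) first claim
  have main_odd : VectorMeasure.map μ (negPair d) = -μ →
      ∀ x : E, Hnet d p μ 0 x = (1/2) * sintegral μ (fun z : Sph d × ℝ =>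
        ((⟪(z.1 : E), x⟫ - z.2) ^ p + z.2 ^ p) / ψ p z.2) := by
    intro hmap x
    have hσ : sintegral μ (fun z => g x (negPair d z)) = - sintegral μ (g x) := by
      rw [hmapeq x, hmap, sintegral_neg']
    have hptwise : ∀ z : Sph d × ℝ, g x z - g x (negPair d z) =
        ((⟪(z.1 : E), x⟫ - z.2) ^ p + z.2 ^ p) / ψ p z.2 := by
      intro z
      rw [hcomp, hg_def]
      simp only
      rw [div_sub_div_same]
      congr 1
      have h1 : z.2 - ⟪(z.1 : E), x⟫ = -(⟪(z.1 : E), x⟫ - z.2) := by ring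
      rw [h1]
      have h2 := repu_sub_neg p hodd (⟪(z.1 : E), x⟫ - z.2)
      have h3 := repu_sub_neg p hodd z.2
      ring_nf
      ring_nf at h2 h3
      linarith
    rw [hHnet x]
    have : sintegral μ (fun z : Sph d × ℝ =>
        ((⟪(z.1 : E), x⟫ - z.2) ^ p + z.2 ^ p) / ψ p z.2)
        = sintegral μ (fun z => g x z - g x (negPair d z)) :=
      sintegral_congr μ _ _ (fun z => (hptwise z).symm)
    rw [this, sintegral_sub μ _ _ (hg_int x) (hgc_int x), hσ]
    ring
  constructor
  · intro hmap
    refine ⟨main_odd hmap, ?_⟩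
    -- polynomial part
    -- term functions
    set T : (k : ℕ) → (Fin (k+1) → Fin d) → Sph d × ℝ → ℝ := fun k f z =>
      (∏ j, (z.1 : E) (f j)) * ((-z.2) ^ (p - (k+1)) * (p.choose (k+1) : ℝ) / ψ p z.2)
      with hT_def
    have hT_bound : ∀ k, ∀ f : Fin (k+1) → Fin d, ∀ z : Sph d × ℝ,
        |T k f z| ≤ (p.choose (k+1) : ℝ) := by
      intro k f z
      rw [hT_def]
      simp only [abs_mul, abs_div, abs_pow, abs_neg, abs_of_pos (psi_pos p z.2),
        Nat.abs_cast]
      have h1 : |∏ j, (z.1 : E) (f j)| ≤ 1 := by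
        rw [Finset.abs_prod]
        calc ∏ j, |(z.1 : E) (f j)| ≤ ∏ _j : Fin (k+1), 1 :=
              Finset.prod_le_prod (fun j _ => abs_nonneg _)
                (fun j _ => le_trans (coord_abs_le _ _) (le_of_eq z.1.2))
          _ = 1 := by simp
      have h2 : |z.2| ^ (p - (k+1)) * (p.choose (k+1) : ℝ) / ψ p z.2
          ≤ (p.choose (k+1) : ℝ) := by
        rw [div_le_iff₀ (psi_pos p z.2)]
        have h3 : |z.2| ^ (p - (k+1)) ≤ ψ p z.2 :=
          abs_pow_le_psi p _ (by omega) z.2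
        calc |z.2| ^ (p-(k+1)) * (p.choose (k+1) : ℝ)
            ≤ ψ p z.2 * (p.choose (k+1) : ℝ) := by
              apply mul_le_mul_of_nonneg_right h3 (by positivity)
          _ = (p.choose (k+1) : ℝ) * ψ p z.2 := by ring
      calc |∏ j, (z.1 : E) (f j)| * (|z.2| ^ (p-(k+1)) * (p.choose (k+1) : ℝ) / ψ p z.2)
          ≤ 1 * (p.choose (k+1) : ℝ) := by
            apply mul_le_mul h1 h2 (div_nonneg (by positivity) (psi_pos p z.2).le) (by norm_num)
        _ = (p.choose (k+1) : ℝ) := one_mul _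
    have hT_cont : ∀ k, ∀ f : Fin (k+1) → Fin d, Continuous (T k f) := by
      intro k f
      rw [hT_def]
      apply Continuous.mul
      · apply continuous_finset_prod
        intro j _
        exact (EuclideanSpace.proj (f j)).continuous.comp
          (continuous_subtype_val.comp continuous_fst)
      · apply Continuous.div
        · exact (continuous_snd.neg.pow _).mul continuous_const
        · simp only [ψ]
          exact continuous_const.add ((continuous_abs.comp continuous_snd).pow (p-1))
        · exact fun z => psi_ne p z.2
    have hT_int : ∀ k, ∀ f : Fin (k+1) → Fin d, ∀ c : ℝ, IntS μ (fun z => T k f z * c) := by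
      intro k f c
      apply intS_of_bound μ _ (((hT_cont k f).mul continuous_const).measurable)
        ((p.choose (k+1) : ℝ) * |c|)
      intro z
      rw [Pi.mul_apply, abs_mul]
      exact mul_le_mul_of_nonneg_right (hT_bound k f z) (abs_nonneg c)
    -- the polynomial
    refine ⟨∑ k ∈ Finset.range p, ∑ f : Fin (k+1) → Fin d,
      MvPolynomial.C ((1/2) * sintegral μ (T k f)) * ∏ j, MvPolynomial.X (f j), ?_, ?_⟩
    · -- total degree
      apply le_trans (MvPolynomial.totalDegree_finset_sum _ _)
      apply Finset.sup_le
      intro k hk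
      rw [Finset.mem_range] at hk
      apply le_trans (MvPolynomial.totalDegree_finset_sum _ _)
      apply Finset.sup_le
      intro f _
      calc (MvPolynomial.C ((1/2) * sintegral μ (T k f)) *
              ∏ j, MvPolynomial.X (f j) : MvPolynomial (Fin d) ℝ).totalDegree
          ≤ (MvPolynomial.C ((1/2) * sintegral μ (T k f)) :
              MvPolynomial (Fin d) ℝ).totalDegree +
            (∏ j : Fin (k+1), MvPolynomial.X (f j) : MvPolynomial (Fin d) ℝ).totalDegree :=
            MvPolynomial.totalDegree_mul _ _
        _ ≤ 0 + ∑ j : Fin (k+1),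
              (MvPolynomial.X (f j) : MvPolynomial (Fin d) ℝ).totalDegree := by
            gcongr
            · exact le_of_eq (MvPolynomial.totalDegree_C _)
            · exact MvPolynomial.totalDegree_finset_prod _ _
        _ = ∑ _j : Fin (k+1), 1 := by
            rw [zero_add]
            exact Finset.sum_congr rfl (fun j _ => MvPolynomial.totalDegree_X _)
        _ = k + 1 := by simp
        _ ≤ p := by omega
    · -- evaluation
      intro x
      rw [main_odd hmap x]
      -- pointwise expansion
      have expand : ∀ z : Sph d × ℝ,
          ((⟪(z.1 : E), x⟫ - z.2) ^ p + z.2 ^ p) / ψ p z.2 =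
          ∑ k ∈ Finset.range p, ∑ f : Fin (k+1) → Fin d, T k f z * ∏ j, x (f j) := by
        intro z
        set S := ⟪(z.1 : E), x⟫ with hS
        set b := z.2
        have hSsum : S = ∑ i, (z.1 : E) i * x i := by
          rw [hS]
          simp [PiLp.inner_apply, RCLike.inner_apply, conj_trivial]
          exact Finset.sum_congr rfl (fun i _ => mul_comm _ _)
        have step1 : (S - b) ^ p + b ^ p =
            ∑ k ∈ Finset.range p, S ^ (k+1) * (-b) ^ (p-(k+1)) * (p.choose (k+1) : ℝ) := by
          rw [sub_eq_add_neg, add_pow, Finset.sum_range_succ']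
          have h0 : S ^ 0 * (-b) ^ (p - 0) * (p.choose 0 : ℝ) = -(b ^ p) := by
            rw [pow_zero, one_mul, Nat.sub_zero, Nat.choose_zero_right,
              Nat.cast_one, mul_one, hodd.neg_pow]
          rw [h0]
          ring
        rw [step1, Finset.sum_div]
        apply Finset.sum_congr rfl
        intro k hk
        have hpow : S ^ (k+1) = ∑ f : Fin (k+1) → Fin d,
            (∏ j, (z.1 : E) (f j)) * ∏ j, x (f j) := by
          rw [hSsum, Fintype.sum_pow]
          exact Finset.sum_congr rfl (fun f _ => Finset.prod_mul_distrib)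
        rw [hpow, Finset.sum_mul, Finset.sum_mul, Finset.sum_div]
        apply Finset.sum_congr rfl
        intro f _
        rw [hT_def]
        simp only
        field_simp
        ring
      have h1 : ∀ k ∈ Finset.range p,
          IntS μ (fun z => ∑ f : Fin (k+1) → Fin d, T k f z * ∏ j, x (f j)) :=
        fun k _ => intS_finset_sum μ Finset.univ _ (fun f _ => hT_int k f _)
      rw [sintegral_congr μ _ _ expand, sintegral_finset_sum μ _ _ h1]
      have h2 : ∀ k ∈ Finset.range p,
          sintegral μ (fun z => ∑ f : Fin (k+1) → Fin d, T k f z * ∏ j, x (f j)) =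
          ∑ f : Fin (k+1) → Fin d, sintegral μ (T k f) * ∏ j, x (f j) := by
        intro k _
        rw [sintegral_finset_sum μ _ _ (fun f _ => hT_int k f _)]
        exact Finset.sum_congr rfl (fun f _ => sintegral_mul_right μ (T k f) _)
      rw [Finset.sum_congr rfl h2]
      simp only [map_sum, map_mul, MvPolynomial.eval_C, map_prod, MvPolynomial.eval_X]
      rw [Finset.mul_sum]
      apply Finset.sum_congr rfl
      intro k _
      rw [Finset.mul_sum]
      apply Finset.sum_congr rfl
      intro f _
      ring
  · -- even case
    intro hmap x
    have hσ : sintegral μ (fun z => g x (negPair d z)) = sintegral μ (g x) := by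
      rw [hmapeq x, hmap]
    have hptwise : ∀ z : Sph d × ℝ, g x z + g x (negPair d z) =
        (|⟪(z.1 : E), x⟫ - z.2| ^ p - |z.2| ^ p) / ψ p z.2 := by
      intro z
      rw [hcomp, hg_def]
      simp only
      rw [← add_div]
      congr 1
      have h1 : z.2 - ⟪(z.1 : E), x⟫ = -(⟪(z.1 : E), x⟫ - z.2) := by ring
      rw [h1]
      have h2 := repu_add_neg p hp (⟪(z.1 : E), x⟫ - z.2)
      have h3 := repu_add_neg p hp z.2
      ring_nf
      ring_nf at h2 h3
      linarith
    rw [hHnet x]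
    have : sintegral μ (fun z : Sph d × ℝ =>
        (|⟪(z.1 : E), x⟫ - z.2| ^ p - |z.2| ^ p) / ψ p z.2)
        = sintegral μ (fun z => g x z + g x (negPair d z)) :=
      sintegral_congr μ _ _ (fun z => (hptwise z).symm)
    rw [this, sintegral_add μ _ _ (hg_int x) (hgc_int x), hσ]
    ring
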